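/- If s : ℕ → GF(2) satisfies a linear recurrence of order L, and s' : ℕ → GF(2) satisfies a linear recurrence of order L', then the pointwise product sequence n ↦ s(n) * s'(n) satisfies a linear recurrence of order at most L * L'. -/

import Mathlib

/-- `s` satisfies a linear recurrence of order `L`. -/
def HasLinRec {F : Type*} [Field F] (s : ℕ → F) (L : ℕ) : Prop :=
  ∃ c : Fin L → F, ∀ n, s (n + L) = ∑ i, c i * s (n + (i : ℕ))

section Aux

variable {F : Type*} [Field F]

lemma shift_mem_span (s : ℕ → F) (L : ℕ) (h : HasLinRec s L) (k : ℕ) :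
    (fun n => s (n + k)) ∈ Submodule.span F
      (Set.range fun i : Fin L => fun n => s (n + (i : ℕ))) := by
  obtain ⟨c, hc⟩ := h
  induction k using Nat.strong_induction_on with
  | _ k ih =>
    rcases lt_or_ge k L with hk | hk
    · exact Submodule.subset_span ⟨⟨k, hk⟩, rfl⟩
    · have hfun : (fun n => s (n + k)) =
          ∑ i : Fin L, c i • (fun n => s (n + (k - L + (i : ℕ)))) := by
        funext n
        have h1 : n + k = (n + (k - L)) + L := by omega
        rw [h1, hc]
        simp only [Finset.sum_apply, Pi.smul_apply, smul_eq_mul]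
        exact Finset.sum_congr rfl fun i _ => by rw [← Nat.add_assoc]
      rw [hfun]
      refine Submodule.sum_mem _ fun i _ => Submodule.smul_mem _ _ (ih _ ?_)
      have := i.isLt; omega

lemma prod_shift_mem_span (s s' : ℕ → F) (L L' : ℕ)
    (h : HasLinRec s L) (h' : HasLinRec s' L') (k : ℕ) :
    (fun n => s (n + k) * s' (n + k)) ∈ Submodule.span F
      (Set.range fun p : Fin L × Fin L' =>
        fun n => s (n + (p.1 : ℕ)) * s' (n + (p.2 : ℕ))) := by
  have h1 := shift_mem_span s L h k
  have h2 := shift_mem_span s' L' h' k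
  have hm := Submodule.mul_mem_mul h1 h2
  rw [Submodule.span_mul_span] at hm
  refine Submodule.span_le.mpr ?_ hm
  rintro z hz
  rw [Set.mem_mul] at hz
  obtain ⟨a, ⟨i, rfl⟩, b, ⟨j, rfl⟩, rfl⟩ := hz
  exact Submodule.subset_span ⟨(i, j), rfl⟩

end Aux

/-- The pointwise product of two GF(2) sequences satisfying linear recurrences of orders
`L` and `L'` satisfies a linear recurrence of order at most `L * L'`. -/
theorem linComplexity_mul_le
    (s s' : ℕ → ZMod 2) (L L' : ℕ)
    (h : HasLinRec s L) (h' : HasLinRec s' L') :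
    ∃ M ≤ L * L', HasLinRec (fun n => s n * s' n) M := by
  classical
  set d := L * L' with hd
  set v : Fin L × Fin L' → (ℕ → ZMod 2) :=
    fun p => fun n => s (n + (p.1 : ℕ)) * s' (n + (p.2 : ℕ)) with hv
  set w : Fin (d + 1) → (ℕ → ZMod 2) :=
    fun k => fun n => s (n + (k : ℕ)) * s' (n + (k : ℕ)) with hw
  haveI : Fintype (Set.range v) := Fintype.ofFinite _
  have hdep : ¬ LinearIndependent (ZMod 2) w := by
    intro hli
    have hle := linearIndependent_le_span' w hli (Set.range v)
      (by
        rintro x ⟨k, rfl⟩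
        exact prod_shift_mem_span s s' L L' h h' (k : ℕ))
    have hcard : Fintype.card (Set.range v) ≤ d := by
      calc Fintype.card (Set.range v) ≤ Fintype.card (Fin L × Fin L') :=
            Fintype.card_range_le v
        _ = d := by simp [hd]
    rw [Cardinal.mk_fintype] at hle
    have : (Fintype.card (Fin (d + 1)) : Cardinal) ≤ Fintype.card (Set.range v) := hle
    rw [Nat.cast_le] at this
    simp only [Fintype.card_fin] at this
    omega
  rw [Fintype.not_linearIndependent_iff] at hdep
  obtain ⟨g, hsum, i₀, hi₀⟩ := hdep
  -- G is g extended by zero to all of ℕ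
  set G : ℕ → ZMod 2 := fun m => if hm : m < d + 1 then g ⟨m, hm⟩ else 0 with hG
  set T : Finset (Fin (d + 1)) := Finset.univ.filter (fun i => g i ≠ 0) with hT
  have hTne : T.Nonempty := ⟨i₀, by simp [hT, hi₀]⟩
  set K : Fin (d + 1) := T.max' hTne with hK
  have hgK : g K ≠ 0 := by
    have := T.max'_mem hTne
    simpa [hT] using this
  have hGK : G (K : ℕ) = g K := by simp [hG, K.isLt, Fin.is_le K]
  have hGzero : ∀ m : ℕ, (K : ℕ) < m → G m = 0 := by
    intro m hm
    by_cases hm' : m < d + 1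
    · simp only [hG, dif_pos hm']
      by_contra hne
      have hmem : (⟨m, hm'⟩ : Fin (d + 1)) ∈ T := by simp [hT, hne]
      have := T.le_max' _ hmem
      rw [← hK] at this
      have : (⟨m, hm'⟩ : Fin (d + 1)) ≤ K := this
      simp [Fin.le_def] at this
      omega
    · simp [hG, hm']; intro _; omega
  -- the pointwise relation
  have hrel : ∀ n : ℕ, ∑ m ∈ Finset.range (d + 1), G m * (s (n + m) * s' (n + m)) = 0 := by
    intro n
    have := congrFun hsum n
    simp only [Finset.sum_apply, Pi.smul_apply, smul_eq_mul, Pi.zero_apply, hw] at this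
    rw [← this, ← Fin.sum_univ_eq_sum_range (fun m => G m * (s (n + m) * s' (n + m))) (d + 1)]
    refine Finset.sum_congr rfl fun i _ => ?_
    simp [hG, i.isLt]; intro _; have := i.isLt; omega
  refine ⟨(K : ℕ), by have := K.isLt; omega, ?_⟩
  refine ⟨fun i : Fin (K : ℕ) => -(G (i : ℕ) / G (K : ℕ)), fun n => ?_⟩
  have hrel' : G (K : ℕ) * (s (n + (K : ℕ)) * s' (n + (K : ℕ)))
      + ∑ m ∈ Finset.range (K : ℕ), G m * (s (n + m) * s' (n + m)) = 0 := by
    have hsub : Finset.range ((K : ℕ) + 1) ⊆ Finset.range (d + 1) :=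
      Finset.range_subset_range.mpr (by have := K.isLt; omega)
    have := Finset.sum_subset (f := fun m => G m * (s (n + m) * s' (n + m))) hsub
      (fun m _ hm => by
      have hm' : (K : ℕ) < m := by
        simp only [Finset.mem_range, not_lt] at hm
        omega
      show G m * (s (n + m) * s' (n + m)) = 0
      rw [hGzero m hm', zero_mul])
    rw [hrel n] at this
    rw [Finset.sum_range_succ] at this
    rw [add_comm] at this
    exact this
  have hsum' : ∑ i : Fin (K : ℕ), -(G (i : ℕ) / G (K : ℕ)) * (s (n + (i : ℕ)) * s' (n + (i : ℕ)))
      = (∑ m ∈ Finset.range (K : ℕ), G m * (s (n + m) * s' (n + m))) * (-(G (K : ℕ))⁻¹) := by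
    rw [Fin.sum_univ_eq_sum_range
      (fun m => -(G m / G (K : ℕ)) * (s (n + m) * s' (n + m))) (K : ℕ),
      Finset.sum_mul]
    refine Finset.sum_congr rfl fun m _ => ?_
    rw [div_eq_mul_inv]; ring
  show s (n + (K : ℕ)) * s' (n + (K : ℕ))
      = ∑ i : Fin (K : ℕ), -(G (i : ℕ) / G (K : ℕ)) * (s (n + (i : ℕ)) * s' (n + (i : ℕ)))
  rw [hsum']
  have hGK0 : G (K : ℕ) ≠ 0 := by rw [hGK]; exact hgK
  have h1 : ∑ m ∈ Finset.range (K : ℕ), G m * (s (n + m) * s' (n + m))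
      = -(G (K : ℕ) * (s (n + (K : ℕ)) * s' (n + (K : ℕ)))) := by
    linear_combination hrel'
  rw [h1]
  field_simp
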